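/- Let (Z(n)) be the random walk in Z_+^2 with kernel data (μ, μ_0, μ_1, μ_2), killed at 0, and suppose a function κ : Z_+^2 → R satisfies, for fixed positive reals (x̂, ŷ) with P(x̂,ŷ) = 1 and φ_1(x̂,ŷ) = 1: κ(j) = x̂^{j_1} ŷ^{j_2} − P_j(τ_0 < ∞) + (φ_2(x̂,ŷ) − 1)·H_j(0,ŷ) for j ≠ (0,0), and κ(0,0) = φ_0(x̂,ŷ) − P_{(0,0)}(τ_0<∞) + (φ_2(x̂,ŷ)−1)·H_{(0,0)}(0,ŷ), where H_j(0,y) = Σ_{k_2 ≥ 1} g(j,(0,k_2)) y^{k_2} is assumed finite at y = ŷ for all j. Then κ is harmonic for the killed chain: E_j[κ(Z(1)) ; τ_0 > 1] = κ(j) for all j ∈ Z_+^2. -/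

import Mathlib

/-- `n`-step transition function of the (sub)Markov chain with one-step kernel `p`. -/
noncomputable def iterK {S : Type*} [DecidableEq S] (p : S → S → ℝ) : ℕ → S → S → ℝ
  | 0 => fun j k => if j = k then 1 else 0
  | n + 1 => fun j k => ∑' l, iterK p n j l * p l k

/-- One-step kernel of the partially homogeneous random walk in the quadrant `ℤ₊²`. -/
noncomputable def rwStep (μ μ₀ μ₁ μ₂ : ℤ × ℤ → ℝ) (j k : ℕ × ℕ) : ℝ :=
  if j = (0, 0) then μ₀ ((k.1 : ℤ) - (j.1 : ℤ), (k.2 : ℤ) - (j.2 : ℤ))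
  else if j.2 = 0 then μ₁ ((k.1 : ℤ) - (j.1 : ℤ), (k.2 : ℤ) - (j.2 : ℤ))
  else if j.1 = 0 then μ₂ ((k.1 : ℤ) - (j.1 : ℤ), (k.2 : ℤ) - (j.2 : ℤ))
  else μ ((k.1 : ℤ) - (j.1 : ℤ), (k.2 : ℤ) - (j.2 : ℤ))

/-- The quadrant kernel killed at the origin `(0,0)`. -/
noncomputable def rwKill (μ μ₀ μ₁ μ₂ : ℤ × ℤ → ℝ) (j k : ℕ × ℕ) : ℝ :=
  if k = (0, 0) then 0 else rwStep μ μ₀ μ₁ μ₂ j k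

/-- Green function `g(j,k)` of the quadrant walk killed at the origin. -/
noncomputable def rwGreeng (μ μ₀ μ₁ μ₂ : ℤ × ℤ → ℝ) (j k : ℕ × ℕ) : ℝ :=
  ∑' n : ℕ, iterK (rwKill μ μ₀ μ₁ μ₂) n j k

/-- `P_j(τ₀ < ∞)`, the probability of ever hitting the origin (at a time `≥ 1`). -/
noncomputable def rwHit (μ μ₀ μ₁ μ₂ : ℤ × ℤ → ℝ) (j : ℕ × ℕ) : ℝ :=
  ∑' n : ℕ, ∑' l : ℕ × ℕ, iterK (rwKill μ μ₀ μ₁ μ₂) n j l * rwStep μ μ₀ μ₁ μ₂ l (0, 0)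

/-- `H_j(0,y) = ∑_{k₂ ≥ 1} g(j,(0,k₂)) y^{k₂}`. -/
noncomputable def rwHser (μ μ₀ μ₁ μ₂ : ℤ × ℤ → ℝ) (y : ℝ) (j : ℕ × ℕ) : ℝ :=
  ∑' m : ℕ, rwGreeng μ μ₀ μ₁ μ₂ j (0, m + 1) * y ^ (m + 1)

/-- Generating function `∑_k ν(k) x^{k₁} y^{k₂}` of a jump measure on `ℤ²`. -/
noncomputable def genG (ν : ℤ × ℤ → ℝ) (x y : ℝ) : ℝ :=
  ∑' k : ℤ × ℤ, ν k * x ^ k.1 * y ^ k.2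


/-!
Write `Q` for the killed kernel and `h(k) = x̂^{k₁} ŷ^{k₂}`. Jumps are bounded below, so every state
is entered from finitely many states, and `Q h (j) = h(j) φ_j(x̂, ŷ) - P(j, 0)`, where `φ_j` is the
generating function of the jump law used at `j`. Both `P_·(τ₀ < ∞)` and `H_·(0, ŷ)` are potentials
`G c` of nonnegative charges (`c = P(·, 0)`, resp. `c(k) = ŷ^{k₂}` on the vertical axis), and
Tonelli gives `Q (G c) = G c - c`. The terms `P(j, 0)` cancel, and what is left is
`h(j) (φ_j - 1) = (φ₂ - 1) c(j)`: in the interior and on the horizontal axis because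
`P = φ₁ = 1` there, on the vertical axis because `h(j) = ŷ^{j₂} = c(j)`.
-/

section Tonelli

variable {β γ : Type*}

theorem hasSum_swap_of_nonneg {f : β → γ → ℝ} (hf : ∀ b c, 0 ≤ f b c) {g : β → ℝ}
    {h : γ → ℝ} {a : ℝ} (hg : ∀ b, HasSum (f b) (g b)) (ha : HasSum g a)
    (hh : ∀ c, HasSum (fun b => f b c) (h c)) : HasSum h a := by
  have hs : Summable (Function.uncurry f) :=
    (summable_prod_of_nonneg fun p => hf p.1 p.2).2
      ⟨fun b => (hg b).summable, by simpa [(hg _).tsum_eq] using ha.summable⟩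
  have hsum : HasSum (Function.uncurry f) a := by
    have h := hs.hasSum
    rwa [(h.prod_fiberwise hg).unique ha] at h
  have hswap : HasSum (fun p : γ × β => f p.2 p.1) a :=
    (Equiv.prodComm γ β).hasSum_iff.2 hsum
  exact hswap.prod_fiberwise hh

end Tonelli

section Kernel

variable {S : Type*} [DecidableEq S] {q : S → S → ℝ}

def ColumnFinite (q : S → S → ℝ) : Prop :=
  ∀ k, (Function.support fun j => q j k).Finite

theorem iterK_nonneg (hq : ∀ j k, 0 ≤ q j k) (n : ℕ) (j k : S) : 0 ≤ iterK q n j k := by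
  induction n generalizing k with
  | zero => unfold iterK; split_ifs <;> norm_num
  | succ n ih => exact tsum_nonneg fun l => mul_nonneg (ih l) (hq l k)

theorem ColumnFinite.iterK (hq : ColumnFinite q) (n : ℕ) : ColumnFinite (iterK q n) := by
  induction n with
  | zero =>
    intro k
    refine (Set.finite_singleton k).subset fun j hj => ?_
    by_contra hjk
    exact hj (if_neg hjk)
  | succ n ih =>
    intro k
    refine ((hq k).biUnion fun l _ => ih l).subset fun j hj => ?_
    by_contra hjk
    simp only [Set.mem_iUnion, Function.mem_support, not_exists, not_not] at hjk
    refine hj ((tsum_congr fun l => ?_).trans tsum_zero)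
    by_cases hl : q l k = 0
    · rw [hl, mul_zero]
    · rw [hjk l hl, zero_mul]

theorem iterK_succ_eq_tsum_mul (hq : ColumnFinite q) (n : ℕ) (j k : S) :
    iterK q (n + 1) j k = ∑' l, q j l * iterK q n l k := by
  induction n generalizing j k with
  | zero =>
    show ∑' l, iterK q 0 j l * q l k = ∑' l, q j l * iterK q 0 l k
    simp only [iterK, ite_mul, mul_ite, one_mul, mul_one, zero_mul, mul_zero, eq_comm (a := j)]
    rw [tsum_ite_eq, tsum_ite_eq]
  | succ n ih =>
    have hfin : (Function.support (Function.uncurry fun m l =>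
        q j m * (iterK q n m l * q l k))).Finite := by
      refine (((hq k).biUnion fun l _ => hq.iterK n l).prod (hq k)).subset fun p hp => ?_
      simp only [Function.mem_support, Function.uncurry, ne_eq, mul_eq_zero, not_or] at hp
      exact ⟨Set.mem_biUnion hp.2.2 hp.2.1, hp.2.2⟩
    calc iterK q (n + 2) j k = ∑' l, (∑' m, q j m * iterK q n m l) * q l k :=
          tsum_congr fun l => by rw [ih]
      _ = ∑' l, ∑' m, q j m * (iterK q n m l * q l k) := by
          simp_rw [← tsum_mul_right, mul_assoc]
      _ = ∑' m, ∑' l, q j m * (iterK q n m l * q l k) :=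
          Summable.tsum_comm (summable_of_hasFiniteSupport hfin)
      _ = ∑' m, q j m * iterK q (n + 1) m k := by simp_rw [tsum_mul_left]; rfl

noncomputable def green (q : S → S → ℝ) (j k : S) : ℝ :=
  ∑' n, iterK q n j k

noncomputable def potential (q : S → S → ℝ) (c : S → ℝ) (j : S) : ℝ :=
  ∑' l, green q j l * c l

theorem green_nonneg (hq : ∀ j k, 0 ≤ q j k) (j k : S) : 0 ≤ green q j k :=
  tsum_nonneg fun n => iterK_nonneg hq n j k

theorem hasSum_mul_green (hq : ∀ j k, 0 ≤ q j k) (hfin : ColumnFinite q)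
    (hG : ∀ j k, Summable fun n => iterK q n j k) (j l : S) :
    HasSum (fun k => q j k * green q k l) (green q j l - if j = l then 1 else 0) := by
  refine hasSum_swap_of_nonneg (f := fun n k => q j k * iterK q n k l)
    (g := fun n => iterK q (n + 1) j l) (fun n k => mul_nonneg (hq j k) (iterK_nonneg hq n k l))
    (fun n => ?_) ?_ (fun k => (hG k l).hasSum.mul_left (q j k))
  · rw [iterK_succ_eq_tsum_mul hfin]
    exact (summable_of_hasFiniteSupport ((hfin.iterK n l).subset
      (Function.support_mul_subset_right _ _))).hasSum
  · simpa [iterK, green] using (hasSum_nat_add_iff' 1).2 (hG j l).hasSum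

theorem hasSum_mul_potential (hq : ∀ j k, 0 ≤ q j k) (hfin : ColumnFinite q)
    (hG : ∀ j k, Summable fun n => iterK q n j k) {c : S → ℝ} (hc : ∀ l, 0 ≤ c l)
    (hU : ∀ j, Summable fun l => green q j l * c l) (j : S) :
    HasSum (fun k => q j k * potential q c k) (potential q c j - c j) := by
  refine hasSum_swap_of_nonneg (f := fun l k => q j k * green q k l * c l)
    (g := fun l => (green q j l - if j = l then 1 else 0) * c l)
    (fun l k => mul_nonneg (mul_nonneg (hq j k) (green_nonneg hq k l)) (hc l))
    (fun l => (hasSum_mul_green hq hfin hG j l).mul_right (c l)) ?_ (fun k => ?_)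
  · refine ((hU j).hasSum.sub (hasSum_ite_eq j (c j))).congr_fun fun l => ?_
    by_cases h : j = l
    · subst h; simp [sub_mul]
    · simp [h, Ne.symm h]
  · exact ((hU k).hasSum.mul_left (q j k)).congr_fun fun l => mul_assoc _ _ _

theorem potential_eq_tsum_tsum_iterK_mul (hG : ∀ j k, Summable fun n => iterK q n j k)
    {c : S → ℝ} (hc : (Function.support c).Finite) (j : S) :
    potential q c j = ∑' n, ∑' l, iterK q n j l * c l := by
  have hs : ∀ f : S → ℝ, ∑' l, f l * c l = ∑ l ∈ hc.toFinset, f l * c l := fun f =>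
    tsum_eq_sum fun l hl => by
      rw [Set.Finite.mem_toFinset, Function.notMem_support] at hl
      rw [hl, mul_zero]
  unfold potential green
  simp_rw [hs]
  rw [Summable.tsum_finsetSum fun l _ => (hG j l).mul_right _]
  simp_rw [tsum_mul_right]

end Kernel

theorem hasSum_shift_genG {ν : ℤ × ℤ → ℝ} {x y : ℝ} (hx : x ≠ 0) (hy : y ≠ 0)
    (hs : Summable fun d : ℤ × ℤ => ν d * x ^ d.1 * y ^ d.2) (j : ℕ × ℕ)
    (hν : ∀ d : ℤ × ℤ, d.1 < -(j.1 : ℤ) ∨ d.2 < -(j.2 : ℤ) → ν d = 0) :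
    HasSum (fun k : ℕ × ℕ => ν ((k.1 : ℤ) - j.1, (k.2 : ℤ) - j.2) * (x ^ k.1 * y ^ k.2))
      (x ^ j.1 * y ^ j.2 * genG ν x y) := by
  set e : ℕ × ℕ → ℤ × ℤ := fun k => ((k.1 : ℤ) - j.1, (k.2 : ℤ) - j.2)
  have he : Function.Injective e := fun a b hab => by
    simp only [e, Prod.mk.injEq, sub_left_inj, Nat.cast_inj] at hab
    exact Prod.ext hab.1 hab.2
  have hrange : ∀ d ∉ Set.range e, x ^ j.1 * y ^ j.2 * (ν d * x ^ d.1 * y ^ d.2) = 0 := by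
    intro d hd
    rw [hν d, zero_mul, zero_mul, mul_zero]
    by_contra! h
    exact hd ⟨((d.1 + j.1).toNat, (d.2 + j.2).toNat), by ext <;> simp [e] <;> omega⟩
  refine ((he.hasSum_iff hrange).2 (hs.hasSum.mul_left _)).congr_fun fun k => ?_
  simp only [Function.comp, e, zpow_sub₀ hx, zpow_sub₀ hy, zpow_natCast]
  field_simp

section QuadrantWalk

variable {μ μ₀ μ₁ μ₂ : ℤ × ℤ → ℝ}

def jumpLaw (μ μ₀ μ₁ μ₂ : ℤ × ℤ → ℝ) (j : ℕ × ℕ) : ℤ × ℤ → ℝ :=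
  if j = (0, 0) then μ₀ else if j.2 = 0 then μ₁ else if j.1 = 0 then μ₂ else μ

theorem rwStep_eq_jumpLaw (j k : ℕ × ℕ) :
    rwStep μ μ₀ μ₁ μ₂ j k = jumpLaw μ μ₀ μ₁ μ₂ j ((k.1 : ℤ) - j.1, (k.2 : ℤ) - j.2) := by
  unfold rwStep jumpLaw
  split_ifs <;> rfl

theorem jumpLaw_cases {p : (ℤ × ℤ → ℝ) → Prop} (h : p μ) (h₀ : p μ₀) (h₁ : p μ₁) (h₂ : p μ₂)
    (j : ℕ × ℕ) : p (jumpLaw μ μ₀ μ₁ μ₂ j) := by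
  unfold jumpLaw
  split_ifs <;> assumption

theorem jumpLaw_eq_zero_of_lt_neg_one (hμ : ∀ d : ℤ × ℤ, d.1 < -1 ∨ d.2 < -1 → μ d = 0)
    (hμ₁ : ∀ d : ℤ × ℤ, d.1 < -1 ∨ d.2 < 0 → μ₁ d = 0)
    (hμ₂ : ∀ d : ℤ × ℤ, d.1 < 0 ∨ d.2 < -1 → μ₂ d = 0)
    (hμ₀ : ∀ d : ℤ × ℤ, d.1 < 0 ∨ d.2 < 0 → μ₀ d = 0) (j : ℕ × ℕ) {d : ℤ × ℤ}
    (hd : d.1 < -1 ∨ d.2 < -1) : jumpLaw μ μ₀ μ₁ μ₂ j d = 0 :=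
  jumpLaw_cases (p := fun ν => ν d = 0) (hμ d hd) (hμ₀ d (by omega)) (hμ₁ d (by omega))
    (hμ₂ d (by omega)) j

theorem jumpLaw_eq_zero_of_lt_neg (hμ : ∀ d : ℤ × ℤ, d.1 < -1 ∨ d.2 < -1 → μ d = 0)
    (hμ₁ : ∀ d : ℤ × ℤ, d.1 < -1 ∨ d.2 < 0 → μ₁ d = 0)
    (hμ₂ : ∀ d : ℤ × ℤ, d.1 < 0 ∨ d.2 < -1 → μ₂ d = 0)
    (hμ₀ : ∀ d : ℤ × ℤ, d.1 < 0 ∨ d.2 < 0 → μ₀ d = 0) {j : ℕ × ℕ} {d : ℤ × ℤ}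
    (hd : d.1 < -(j.1 : ℤ) ∨ d.2 < -(j.2 : ℤ)) : jumpLaw μ μ₀ μ₁ μ₂ j d = 0 := by
  obtain ⟨a, b⟩ := j
  simp only at hd
  simp only [jumpLaw, Prod.mk.injEq]
  split_ifs with h0 h2 h1
  · exact hμ₀ d (by omega)
  · exact hμ₁ d (by omega)
  · exact hμ₂ d (by omega)
  · exact hμ d (by omega)

theorem rwStep_nonneg (hnn : ∀ d, 0 ≤ μ d) (h₀nn : ∀ d, 0 ≤ μ₀ d) (h₁nn : ∀ d, 0 ≤ μ₁ d)
    (h₂nn : ∀ d, 0 ≤ μ₂ d) (j k : ℕ × ℕ) : 0 ≤ rwStep μ μ₀ μ₁ μ₂ j k := by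
  rw [rwStep_eq_jumpLaw]
  exact jumpLaw_cases (p := fun ν => ∀ d, 0 ≤ ν d) hnn h₀nn h₁nn h₂nn j _

theorem rwKill_nonneg (hP : ∀ j k, 0 ≤ rwStep μ μ₀ μ₁ μ₂ j k) (j k : ℕ × ℕ) :
    0 ≤ rwKill μ μ₀ μ₁ μ₂ j k := by
  unfold rwKill
  split_ifs
  exacts [le_rfl, hP j k]

theorem columnFinite_rwStep (hμ : ∀ d : ℤ × ℤ, d.1 < -1 ∨ d.2 < -1 → μ d = 0)
    (hμ₁ : ∀ d : ℤ × ℤ, d.1 < -1 ∨ d.2 < 0 → μ₁ d = 0)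
    (hμ₂ : ∀ d : ℤ × ℤ, d.1 < 0 ∨ d.2 < -1 → μ₂ d = 0)
    (hμ₀ : ∀ d : ℤ × ℤ, d.1 < 0 ∨ d.2 < 0 → μ₀ d = 0) :
    ColumnFinite (rwStep μ μ₀ μ₁ μ₂) := by
  intro k
  refine (Finset.range (k.1 + 2) ×ˢ Finset.range (k.2 + 2)).finite_toSet.subset fun j hj => ?_
  rw [Function.mem_support, rwStep_eq_jumpLaw] at hj
  simp only [Finset.coe_product, Set.mem_prod, Finset.coe_range, Set.mem_Iio]
  by_contra! h
  exact hj (jumpLaw_eq_zero_of_lt_neg_one hμ hμ₁ hμ₂ hμ₀ j (by simp only; omega))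

theorem columnFinite_rwKill (h : ColumnFinite (rwStep μ μ₀ μ₁ μ₂)) :
    ColumnFinite (rwKill μ μ₀ μ₁ μ₂) := fun k =>
  (h k).subset fun j hj => by
    rw [Function.mem_support, rwKill] at hj
    split_ifs at hj
    exacts [absurd rfl hj, hj]

theorem hasSum_rwStep_mul_pow (hμ : ∀ d : ℤ × ℤ, d.1 < -1 ∨ d.2 < -1 → μ d = 0)
    (hμ₁ : ∀ d : ℤ × ℤ, d.1 < -1 ∨ d.2 < 0 → μ₁ d = 0)
    (hμ₂ : ∀ d : ℤ × ℤ, d.1 < 0 ∨ d.2 < -1 → μ₂ d = 0)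
    (hμ₀ : ∀ d : ℤ × ℤ, d.1 < 0 ∨ d.2 < 0 → μ₀ d = 0) {x y : ℝ} (hx : x ≠ 0) (hy : y ≠ 0)
    (hs : Summable fun d : ℤ × ℤ => μ d * x ^ d.1 * y ^ d.2)
    (hs₀ : Summable fun d : ℤ × ℤ => μ₀ d * x ^ d.1 * y ^ d.2)
    (hs₁ : Summable fun d : ℤ × ℤ => μ₁ d * x ^ d.1 * y ^ d.2)
    (hs₂ : Summable fun d : ℤ × ℤ => μ₂ d * x ^ d.1 * y ^ d.2) (j : ℕ × ℕ) :
    HasSum (fun k => rwStep μ μ₀ μ₁ μ₂ j k * (x ^ k.1 * y ^ k.2))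
      (x ^ j.1 * y ^ j.2 * genG (jumpLaw μ μ₀ μ₁ μ₂ j) x y) := by
  simp only [rwStep_eq_jumpLaw]
  exact hasSum_shift_genG hx hy
    (jumpLaw_cases (p := fun ν => Summable fun d : ℤ × ℤ => ν d * x ^ d.1 * y ^ d.2)
      hs hs₀ hs₁ hs₂ j) j fun d hd => jumpLaw_eq_zero_of_lt_neg hμ hμ₁ hμ₂ hμ₀ hd

theorem HasSum.rwKill_mul {f : ℕ × ℕ → ℝ} {a : ℝ} {j : ℕ × ℕ}
    (h : HasSum (fun k => rwStep μ μ₀ μ₁ μ₂ j k * f k) a) :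
    HasSum (fun k => rwKill μ μ₀ μ₁ μ₂ j k * f k) (a - rwStep μ μ₀ μ₁ μ₂ j (0, 0) * f (0, 0)) := by
  have h' := h.update (0, 0) 0
  rw [zero_sub, neg_add_eq_sub] at h'
  refine h'.congr_fun fun k => ?_
  rcases eq_or_ne k (0, 0) with rfl | hk
  · simp [rwKill]
  · simp [rwKill, hk]

theorem rwHit_eq_potential
    (hG : ∀ j k : ℕ × ℕ, Summable fun n => iterK (rwKill μ μ₀ μ₁ μ₂) n j k)
    (hfin : ColumnFinite (rwStep μ μ₀ μ₁ μ₂)) (j : ℕ × ℕ) :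
    rwHit μ μ₀ μ₁ μ₂ j = potential (rwKill μ μ₀ μ₁ μ₂) (fun l => rwStep μ μ₀ μ₁ μ₂ l (0, 0)) j :=
  (potential_eq_tsum_tsum_iterK_mul hG (hfin (0, 0)) j).symm

def verticalAxisWeight (y : ℝ) (l : ℕ × ℕ) : ℝ :=
  if l.1 = 0 ∧ l.2 ≠ 0 then y ^ l.2 else 0

theorem verticalAxisWeight_nonneg {y : ℝ} (hy : 0 ≤ y) (l : ℕ × ℕ) :
    0 ≤ verticalAxisWeight y l := by
  unfold verticalAxisWeight
  split_ifs
  exacts [pow_nonneg hy _, le_rfl]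

theorem hasSum_mul_verticalAxisWeight_iff {f : ℕ × ℕ → ℝ} {y a : ℝ} :
    HasSum (fun l => f l * verticalAxisWeight y l) a ↔
      HasSum (fun m : ℕ => f (0, m + 1) * y ^ (m + 1)) a := by
  have he : Function.Injective fun m : ℕ => ((0, m + 1) : ℕ × ℕ) := fun a b h => by
    simpa using h
  rw [← he.hasSum_iff]
  · simp [Function.comp_def, verticalAxisWeight]
  · rintro ⟨a, b⟩ hl
    simp only [verticalAxisWeight, mul_ite, mul_zero, ite_eq_right_iff]
    rintro ⟨rfl, hb⟩
    exact absurd ⟨b - 1, by simp only [Prod.mk.injEq, true_and]; omega⟩ hl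

theorem hasSum_rwKill_mul_of_eq (hP : ∀ j k, 0 ≤ rwStep μ μ₀ μ₁ μ₂ j k)
    (hfin : ColumnFinite (rwStep μ μ₀ μ₁ μ₂)) {x y : ℝ} (hy : 0 ≤ y) {A : ℕ × ℕ → ℝ}
    (hrow : ∀ j, HasSum (fun k => rwStep μ μ₀ μ₁ μ₂ j k * (x ^ k.1 * y ^ k.2)) (A j))
    (hG : ∀ j k : ℕ × ℕ, Summable fun n => iterK (rwKill μ μ₀ μ₁ μ₂) n j k)
    (hH : ∀ j : ℕ × ℕ,
      Summable fun m : ℕ => rwGreeng μ μ₀ μ₁ μ₂ j (0, m + 1) * y ^ (m + 1))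
    {c : ℝ} {κ : ℕ × ℕ → ℝ}
    (hκ : ∀ j, j ≠ (0, 0) →
      κ j = x ^ j.1 * y ^ j.2 - rwHit μ μ₀ μ₁ μ₂ j + c * rwHser μ μ₀ μ₁ μ₂ y j)
    (j : ℕ × ℕ) :
    HasSum (fun k => rwKill μ μ₀ μ₁ μ₂ j k * κ k)
      (A j - rwHit μ μ₀ μ₁ μ₂ j + c * (rwHser μ μ₀ μ₁ μ₂ y j - verticalAxisWeight y j)) := by
  have hQ := rwKill_nonneg hP
  have hQfin := columnFinite_rwKill hfin
  have hV : ∀ i, HasSum (fun l => green (rwKill μ μ₀ μ₁ μ₂) i l * verticalAxisWeight y l)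
      (rwHser μ μ₀ μ₁ μ₂ y i) := fun i => hasSum_mul_verticalAxisWeight_iff.2 (hH i).hasSum
  have hpow : HasSum (fun k => rwKill μ μ₀ μ₁ μ₂ j k * (x ^ k.1 * y ^ k.2))
      (A j - rwStep μ μ₀ μ₁ μ₂ j (0, 0)) := by
    simpa using (hrow j).rwKill_mul
  have hhit : HasSum (fun k => rwKill μ μ₀ μ₁ μ₂ j k * rwHit μ μ₀ μ₁ μ₂ k)
      (rwHit μ μ₀ μ₁ μ₂ j - rwStep μ μ₀ μ₁ μ₂ j (0, 0)) := by
    simp only [rwHit_eq_potential hG hfin]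
    exact hasSum_mul_potential hQ hQfin hG (fun l => hP l _) (fun i =>
      summable_of_hasFiniteSupport ((hfin (0, 0)).subset (Function.support_mul_subset_right _ _))) j
  have hser : HasSum (fun k => rwKill μ μ₀ μ₁ μ₂ j k * rwHser μ μ₀ μ₁ μ₂ y k)
      (rwHser μ μ₀ μ₁ μ₂ y j - verticalAxisWeight y j) := by
    simp only [← fun i => (hV i).tsum_eq]
    exact hasSum_mul_potential hQ hQfin hG (verticalAxisWeight_nonneg hy) (fun i => (hV i).summable) j
  -- the mass `P(j, 0)` that killing removes from `Q h` is the one-step mass of `P_j(τ₀ < ∞)`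
  have h := (hpow.sub hhit).add (hser.mul_left c)
  rw [sub_sub_sub_cancel_right] at h
  refine h.congr_fun fun k => ?_
  rcases eq_or_ne k (0, 0) with rfl | hk
  · simp [rwKill]
  · rw [hκ k hk]
    ring

theorem pow_mul_genG_jumpLaw_sub {x y : ℝ} (hP : genG μ x y = 1) (hφ₁ : genG μ₁ x y = 1)
    {j : ℕ × ℕ} (hj : j ≠ (0, 0)) :
    x ^ j.1 * y ^ j.2 * genG (jumpLaw μ μ₀ μ₁ μ₂ j) x y
      - (genG μ₂ x y - 1) * verticalAxisWeight y j = x ^ j.1 * y ^ j.2 := by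
  obtain ⟨a, b⟩ := j
  simp only [ne_eq, Prod.mk.injEq, not_and] at hj
  simp only [jumpLaw, verticalAxisWeight, Prod.mk.injEq]
  split_ifs <;> simp_all
  ring

end QuadrantWalk

theorem kappa1_harmonic_for_killed_walk_general
    (μ μ₀ μ₁ μ₂ : ℤ × ℤ → ℝ)
    (hnn : ∀ k, 0 ≤ μ k) (h₀nn : ∀ k, 0 ≤ μ₀ k) (h₁nn : ∀ k, 0 ≤ μ₁ k)
    (h₂nn : ∀ k, 0 ≤ μ₂ k)
    (hμsupp : ∀ k : ℤ × ℤ, k.1 < -1 ∨ k.2 < -1 → μ k = 0)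
    (hμ₁supp : ∀ k : ℤ × ℤ, k.1 < -1 ∨ k.2 < 0 → μ₁ k = 0)
    (hμ₂supp : ∀ k : ℤ × ℤ, k.1 < 0 ∨ k.2 < -1 → μ₂ k = 0)
    (hμ₀supp : ∀ k : ℤ × ℤ, k.1 < 0 ∨ k.2 < 0 → μ₀ k = 0)
    (xh yh : ℝ) (hxh : 0 < xh) (hyh : 0 < yh)
    (hProot : genG μ xh yh = 1) (hφ₁root : genG μ₁ xh yh = 1)
    (hsum : Summable (fun k : ℤ × ℤ => μ k * xh ^ k.1 * yh ^ k.2))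
    (hsum₀ : Summable (fun k : ℤ × ℤ => μ₀ k * xh ^ k.1 * yh ^ k.2))
    (hsum₁ : Summable (fun k : ℤ × ℤ => μ₁ k * xh ^ k.1 * yh ^ k.2))
    (hsum₂ : Summable (fun k : ℤ × ℤ => μ₂ k * xh ^ k.1 * yh ^ k.2))
    (hGreen : ∀ j k : ℕ × ℕ, Summable (fun n : ℕ => iterK (rwKill μ μ₀ μ₁ μ₂) n j k))
    (hH : ∀ j : ℕ × ℕ,
      Summable (fun m : ℕ => rwGreeng μ μ₀ μ₁ μ₂ j (0, m + 1) * yh ^ (m + 1)))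
    (κ : ℕ × ℕ → ℝ)
    (hκ : ∀ j : ℕ × ℕ, j ≠ (0, 0) →
      κ j = xh ^ j.1 * yh ^ j.2 - rwHit μ μ₀ μ₁ μ₂ j +
        (genG μ₂ xh yh - 1) * rwHser μ μ₀ μ₁ μ₂ yh j)
    (hκ0 : κ (0, 0) = genG μ₀ xh yh - rwHit μ μ₀ μ₁ μ₂ (0, 0) +
        (genG μ₂ xh yh - 1) * rwHser μ μ₀ μ₁ μ₂ yh (0, 0)) :
    ∀ j : ℕ × ℕ, ∑' k : ℕ × ℕ, rwKill μ μ₀ μ₁ μ₂ j k * κ k = κ j := by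
  intro j
  have hrow := hasSum_rwStep_mul_pow hμsupp hμ₁supp hμ₂supp hμ₀supp hxh.ne' hyh.ne'
    hsum hsum₀ hsum₁ hsum₂
  have hharm := hasSum_rwKill_mul_of_eq (rwStep_nonneg hnn h₀nn h₁nn h₂nn)
    (columnFinite_rwStep hμsupp hμ₁supp hμ₂supp hμ₀supp) hyh.le hrow hGreen hH hκ j
  rw [hharm.tsum_eq]
  rcases eq_or_ne j (0, 0) with rfl | hj
  · simp [jumpLaw, verticalAxisWeight, hκ0]
  · rw [hκ j hj]
    linear_combination pow_mul_genG_jumpLaw_sub hProot hφ₁root hj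

/-- The function `κ(j) = x̂^{j₁} ŷ^{j₂} − P_j(τ₀<∞) + (φ₂(x̂,ŷ)−1) H_j(0,ŷ)`
(suitably modified at the origin), with `P(x̂,ŷ) = φ₁(x̂,ŷ) = 1`, is harmonic for the
quadrant walk killed at the origin. -/
theorem kappa1_harmonic_for_killed_walk
    (μ μ₀ μ₁ μ₂ : ℤ × ℤ → ℝ)
    (hnn : ∀ k, 0 ≤ μ k) (h₀nn : ∀ k, 0 ≤ μ₀ k) (h₁nn : ∀ k, 0 ≤ μ₁ k)
    (h₂nn : ∀ k, 0 ≤ μ₂ k)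
    (hμ : ∑' k : ℤ × ℤ, μ k = 1)
    (hμ₀ : ∑' k : ℤ × ℤ, μ₀ k ≤ 1) (hμ₁ : ∑' k : ℤ × ℤ, μ₁ k ≤ 1)
    (hμ₂ : ∑' k : ℤ × ℤ, μ₂ k ≤ 1)
    (hμsupp : ∀ k : ℤ × ℤ, k.1 < -1 ∨ k.2 < -1 → μ k = 0)
    (hμ₁supp : ∀ k : ℤ × ℤ, k.1 < -1 ∨ k.2 < 0 → μ₁ k = 0)
    (hμ₂supp : ∀ k : ℤ × ℤ, k.1 < 0 ∨ k.2 < -1 → μ₂ k = 0)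
    (hμ₀supp : ∀ k : ℤ × ℤ, k.1 < 0 ∨ k.2 < 0 → μ₀ k = 0)
    (xh yh : ℝ) (hxh : 0 < xh) (hyh : 0 < yh)
    (hProot : genG μ xh yh = 1) (hφ₁root : genG μ₁ xh yh = 1)
    (hsum : Summable (fun k : ℤ × ℤ => μ k * xh ^ k.1 * yh ^ k.2))
    (hsum₀ : Summable (fun k : ℤ × ℤ => μ₀ k * xh ^ k.1 * yh ^ k.2))
    (hsum₁ : Summable (fun k : ℤ × ℤ => μ₁ k * xh ^ k.1 * yh ^ k.2))
    (hsum₂ : Summable (fun k : ℤ × ℤ => μ₂ k * xh ^ k.1 * yh ^ k.2))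
    (hGreen : ∀ j k : ℕ × ℕ, Summable (fun n : ℕ => iterK (rwKill μ μ₀ μ₁ μ₂) n j k))
    (hH : ∀ j : ℕ × ℕ,
      Summable (fun m : ℕ => rwGreeng μ μ₀ μ₁ μ₂ j (0, m + 1) * yh ^ (m + 1)))
    (κ : ℕ × ℕ → ℝ)
    (hκ : ∀ j : ℕ × ℕ, j ≠ (0, 0) →
      κ j = xh ^ j.1 * yh ^ j.2 - rwHit μ μ₀ μ₁ μ₂ j +
        (genG μ₂ xh yh - 1) * rwHser μ μ₀ μ₁ μ₂ yh j)
    (hκ0 : κ (0, 0) = genG μ₀ xh yh - rwHit μ μ₀ μ₁ μ₂ (0, 0) +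
        (genG μ₂ xh yh - 1) * rwHser μ μ₀ μ₁ μ₂ yh (0, 0)) :
    ∀ j : ℕ × ℕ, ∑' k : ℕ × ℕ, rwKill μ μ₀ μ₁ μ₂ j k * κ k = κ j :=
  kappa1_harmonic_for_killed_walk_general μ μ₀ μ₁ μ₂ hnn h₀nn h₁nn h₂nn hμsupp hμ₁supp hμ₂supp
    hμ₀supp xh yh hxh hyh hProot hφ₁root hsum hsum₀ hsum₁ hsum₂ hGreen hH κ hκ hκ0
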